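/- arXiv:1112.3479 — 4 statements merged into one kernel-verified Lean document; each statement's English description precedes it below -/
import Mathlib

section
/- Let A be an abelian category with enough projectives, X and Y objects, and for each object Z fix a short exact sequence 0 → ΩZ → PZ → Z → 0 with PZ projective. Suppose that for X, every endomorphism s of PX with s ≫ p_X = p_X is an isomorphism. Let f : X → Y be a morphism whose class [f] in the stable category A/Proj(A) is a monomorphism. Then the induced morphism Ω[f] : ΩX → ΩY is a split monomorphism in the stable category. -/
open CategoryTheory CategoryTheory.Limits

/-- `f` factors through a projective object. -/
def FactorsThruProj {A : Type*} [Category A] {X Y : A} (f : X ⟶ Y) : Prop :=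
  ∃ (P : A) (_ : Projective P) (g : X ⟶ P) (h : P ⟶ Y), g ≫ h = f

/-- Let `A` be abelian with enough projectives, with chosen short exact sequences
`0 ⟶ ΩX ⟶ PX ⟶ X ⟶ 0` and `0 ⟶ ΩY ⟶ PY ⟶ Y ⟶ 0` with `PX`, `PY` projective.
Suppose every endomorphism `s` of `PX` with `s ≫ pX = pX` is an isomorphism.
If the class of `f : X ⟶ Y` is a monomorphism in the stable category `A/Proj(A)`,
then any `Ω f : ΩX ⟶ ΩY` completing `f` to a morphism of short exact sequences is a
split monomorphism in the stable category. -/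
theorem stmt7 {A : Type*} [Category A] [Abelian A] [EnoughProjectives A]
    {X Y ΩX ΩY PX PY : A}
    (iX : ΩX ⟶ PX) (pX : PX ⟶ X) (iY : ΩY ⟶ PY) (pY : PY ⟶ Y)
    [Projective PX] [Projective PY] [Mono iX] [Epi pX] [Mono iY] [Epi pY]
    (wX : iX ≫ pX = 0) (hX : IsLimit (KernelFork.ofι iX wX))
    (wY : iY ≫ pY = 0) (hY : IsLimit (KernelFork.ofι iY wY))
    (hs : ∀ s : PX ⟶ PX, s ≫ pX = pX → IsIso s)
    (f : X ⟶ Y)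
    (hmono : ∀ ⦃T : A⦄ (q q' : T ⟶ X), FactorsThruProj (q ≫ f - q' ≫ f) →
      FactorsThruProj (q - q'))
    (fhat : PX ⟶ PY) (h1 : fhat ≫ pY = pX ≫ f)
    (f' : ΩX ⟶ ΩY) (h2 : f' ≫ iY = iX ≫ fhat) :
    ∃ r : ΩY ⟶ ΩX, FactorsThruProj (f' ≫ r - 𝟙 ΩX) := by
  -- The pullback `Q` of `pY` along `f`, with projections `a`, `b`.
  let a : pullback f pY ⟶ X := pullback.fst f pY
  let b : pullback f pY ⟶ PY := pullback.snd f pY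
  have hab : a ≫ f = b ≫ pY := pullback.condition
  -- `j : ΩY ⟶ Q` is the kernel of `a`.
  let j : ΩY ⟶ pullback f pY := pullback.lift 0 iY (by simp [wY])
  have hja : j ≫ a = 0 := pullback.lift_fst _ _ _
  have hjb : j ≫ b = iY := pullback.lift_snd _ _ _
  -- lift `pX` through the epi `a`
  let u : PX ⟶ pullback f pY := Projective.factorThru pX a
  have hua : u ≫ a = pX := Projective.factorThru_comp pX a
  -- `[f]` mono : factor `a` through a projective, hence through `pX`
  obtain ⟨P, hP, g, h, hgh⟩ : FactorsThruProj a := by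
    have := hmono a 0 ⟨PY, inferInstance, b, pY, by simp [← hab]⟩
    simpa using this
  haveI := hP
  let k : pullback f pY ⟶ PX := g ≫ Projective.factorThru h pX
  have hka : k ≫ pX = a := by
    have h' : Projective.factorThru h pX ≫ pX = h := Projective.factorThru_comp h pX
    simp [k, Category.assoc, h', hgh]
  -- `r₀ : ΩY ⟶ ΩX` induced by `j ≫ k`
  obtain ⟨r₀, hr₀⟩ := KernelFork.IsLimit.lift' hX (j ≫ k)
    (by rw [Category.assoc, hka, hja])
  change ΩY ⟶ ΩX at r₀
  simp only [Fork.ι_ofι] at hr₀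
  -- `v : ΩX ⟶ ΩY` induced by `iX ≫ u`
  obtain ⟨v, hv⟩ := KernelFork.IsLimit.lift' hY (iX ≫ u ≫ b)
    (by rw [Category.assoc, Category.assoc, ← hab, ← Category.assoc u, hua,
        ← Category.assoc, wX, zero_comp])
  change ΩX ⟶ ΩY at v
  simp only [Fork.ι_ofι] at hv
  have hvj : v ≫ j = iX ≫ u := by
    apply pullback.hom_ext
    · rw [Category.assoc, Category.assoc]
      show v ≫ j ≫ a = iX ≫ u ≫ a
      rw [hja, comp_zero, hua, wX]
    · rw [Category.assoc, Category.assoc]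
      show v ≫ j ≫ b = iX ≫ u ≫ b
      rw [hjb, hv]
  -- `d : PX ⟶ ΩY` with `d ≫ iY = u ≫ b - fhat`
  obtain ⟨d, hd⟩ := KernelFork.IsLimit.lift' hY (u ≫ b - fhat)
    (by rw [Preadditive.sub_comp, Category.assoc, ← hab, ← Category.assoc, hua, h1, sub_self])
  change PX ⟶ ΩY at d
  simp only [Fork.ι_ofι] at hd
  have hvf : v - f' = iX ≫ d := by
    rw [← cancel_mono iY, Preadditive.sub_comp, hv, h2, Category.assoc, hd,
      Preadditive.comp_sub]
  -- `s := u ≫ k` is an automorphism of `PX` over `pX`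
  set s : PX ⟶ PX := u ≫ k with hsdef
  have hspX : s ≫ pX = pX := by rw [hsdef, Category.assoc, hka, hua]
  haveI : IsIso s := hs _ hspX
  have hinv : inv s ≫ pX = pX := by
    rw [IsIso.inv_comp_eq]; exact hspX.symm
  -- `τ : ΩX ⟶ ΩX` induced by `inv s`
  obtain ⟨τ, hτ⟩ := KernelFork.IsLimit.lift' hX (iX ≫ inv s)
    (by rw [Category.assoc, hinv, wX])
  change ΩX ⟶ ΩX at τ
  simp only [Fork.ι_ofι] at hτ
  have e0 : v ≫ r₀ ≫ iX = iX ≫ s := by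
    rw [hr₀, ← Category.assoc, hvj, hsdef, Category.assoc]
  have hvr : v ≫ r₀ ≫ τ = 𝟙 ΩX := by
    rw [← cancel_mono iX, Category.assoc, Category.assoc, hτ, Category.id_comp,
      ← Category.assoc, ← Category.assoc, Category.assoc v r₀ iX, e0,
      Category.assoc, IsIso.hom_inv_id, Category.comp_id]
  have key : f' ≫ (r₀ ≫ τ) - 𝟙 ΩX = iX ≫ (-(d ≫ r₀ ≫ τ)) := by
    have step : f' ≫ (r₀ ≫ τ) - 𝟙 ΩX = (f' - v) ≫ (r₀ ≫ τ) := by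
      rw [Preadditive.sub_comp, hvr]
    rw [step, ← neg_sub v f', hvf, Preadditive.neg_comp, Category.assoc,
      ← Preadditive.comp_neg]
  exact ⟨r₀ ≫ τ, PX, inferInstance, iX, -(d ≫ r₀ ≫ τ), key.symm⟩
end

section
/- Let A be an abelian category with enough projectives such that every object admits a projective cover. Then the Heller operator Ω on the stable category A/Proj(A) maps every monomorphism to a split monomorphism; in particular, Ω preserves monomorphisms. -/
open CategoryTheory CategoryTheory.Limits

/-- `i : S ⟶ M` is small: `biprod.desc i t` epi implies `t` epi. -/
def IsSmallMor {A : Type*} [Category A] [Abelian A] {S M : A} (i : S ⟶ M) : Prop :=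
  ∀ ⦃T : A⦄ (t : T ⟶ M), Epi (biprod.desc i t) → Epi t

/-- Let `A` be abelian with enough projectives in which every object admits a projective
cover. Constructing the Heller operator via chosen short exact sequences coming from
projective covers, `Ω` maps any monomorphism of the stable category `A/Proj(A)` to a
split monomorphism. -/
theorem stmt8 {A : Type*} [Category A] [Abelian A] [EnoughProjectives A]
    (hcov : ∀ Z : A, ∃ (P : A) (p : P ⟶ Z), Projective P ∧ Epi p ∧ IsSmallMor (kernel.ι p))
    {X Y ΩX ΩY PX PY : A}
    (iX : ΩX ⟶ PX) (pX : PX ⟶ X) (iY : ΩY ⟶ PY) (pY : PY ⟶ Y)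
    [Projective PX] [Projective PY] [Mono iX] [Epi pX] [Mono iY] [Epi pY]
    (wX : iX ≫ pX = 0) (hX : IsLimit (KernelFork.ofι iX wX))
    (wY : iY ≫ pY = 0) (hY : IsLimit (KernelFork.ofι iY wY))
    (hsmallX : IsSmallMor iX) (hsmallY : IsSmallMor iY)
    (f : X ⟶ Y)
    (hmono : ∀ ⦃T : A⦄ (q q' : T ⟶ X), FactorsThruProj (q ≫ f - q' ≫ f) →
      FactorsThruProj (q - q'))
    (fhat : PX ⟶ PY) (h1 : fhat ≫ pY = pX ≫ f)
    (f' : ΩX ⟶ ΩY) (h2 : f' ≫ iY = iX ≫ fhat) :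
    ∃ r : ΩY ⟶ ΩX, FactorsThruProj (f' ≫ r - 𝟙 ΩX) := by
  -- The pullback `E` of `pY` along `f`.
  set E := pullback pY f with hE
  -- `π : E ⟶ X` factors through a projective since `π ≫ f = fst ≫ pY`.
  have hπf : FactorsThruProj ((pullback.snd pY f) ≫ f - (0 : E ⟶ X) ≫ f) := by
    refine ⟨PY, inferInstance, pullback.fst pY f, pY, ?_⟩
    rw [← pullback.condition]; simp
  obtain ⟨Q, hQ, a, b, hab⟩ := hmono (pullback.snd pY f) 0 hπf
  have hab' : a ≫ b = pullback.snd pY f := by simpa using hab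
  letI := hQ
  -- lift `b : Q ⟶ X` through `pX`
  set c : Q ⟶ PX := Projective.factorThru b pX with hc
  have hcpX : c ≫ pX = b := Projective.factorThru_comp b pX
  set d : E ⟶ PX := a ≫ c with hd
  have hdpX : d ≫ pX = pullback.snd pY f := by
    rw [hd, Category.assoc, hcpX, hab']
  -- the comparison map `e : PX ⟶ E`
  set e : PX ⟶ E := pullback.lift fhat pX h1 with he
  have hesnd : e ≫ pullback.snd pY f = pX := pullback.lift_snd _ _ _
  have hefst : e ≫ pullback.fst pY f = fhat := pullback.lift_fst _ _ _
  -- `𝟙 PX - e ≫ d` kills `pX`, hence factors through `iX`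
  have hw0 : (𝟙 PX - e ≫ d) ≫ pX = 0 := by
    simp only [Preadditive.sub_comp, Category.id_comp, Category.assoc, hdpX, hesnd, sub_self]
  obtain ⟨w₀, hw₀⟩ := KernelFork.IsLimit.lift' hX (𝟙 PX - e ≫ d) hw0
  let w : PX ⟶ ΩX := w₀
  have hw : w ≫ iX = 𝟙 PX - e ≫ d := hw₀
  -- the inclusion `κ : ΩY ⟶ E`
  set κ : ΩY ⟶ E := pullback.lift iY 0 (by simp [wY]) with hκ
  have hκsnd : κ ≫ pullback.snd pY f = 0 := pullback.lift_snd _ _ _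
  have hκfst : κ ≫ pullback.fst pY f = iY := pullback.lift_fst _ _ _
  -- `κ ≫ d` kills `pX`, hence factors through `iX`, giving the retraction `r`
  have hr0 : (κ ≫ d) ≫ pX = 0 := by rw [Category.assoc, hdpX, hκsnd]
  obtain ⟨r₀, hrr₀⟩ := KernelFork.IsLimit.lift' hX (κ ≫ d) hr0
  let r : ΩY ⟶ ΩX := r₀
  have hrr : r ≫ iX = κ ≫ d := hrr₀
  refine ⟨r, PX, inferInstance, iX, -w, ?_⟩
  -- key identity: `f' ≫ κ = iX ≫ e`
  have hkey : f' ≫ κ = iX ≫ e := by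
    apply pullback.hom_ext
    · rw [Category.assoc, hκfst, h2, Category.assoc, hefst]
    · rw [Category.assoc, hκsnd, Category.assoc, hesnd, comp_zero, wX]
  rw [← cancel_mono iX]
  calc (iX ≫ (-w)) ≫ iX = iX ≫ (-(𝟙 PX - e ≫ d)) := by
        rw [Category.assoc, Preadditive.neg_comp, hw, Preadditive.comp_neg]
    _ = iX ≫ (e ≫ d) - iX := by
        rw [neg_sub, Preadditive.comp_sub, Category.comp_id]
    _ = f' ≫ κ ≫ d - iX := by rw [← Category.assoc, ← hkey, Category.assoc]
    _ = (f' ≫ r - 𝟙 ΩX) ≫ iX := by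
        rw [Preadditive.sub_comp, Category.id_comp, Category.assoc, hrr]
end

section
/- Let H and H' be the specific 7×7 matrices with nonnegative integer entries H = [[1,0,1,0,1,0,0],[1,1,1,1,1,0,1],[0,1,1,0,1,1,0],[0,1,0,2,1,0,1],[0,1,0,1,1,0,1],[1,1,0,0,0,1,0],[0,1,1,1,1,1,1]] and H' = [[1,0,1,0,1,0,0],[1,1,0,0,0,1,0],[0,1,1,0,1,1,0],[0,0,0,0,0,0,0],[0,1,1,0,1,1,0],[1,1,0,0,0,1,0],[0,0,0,0,0,0,0]]. Then there is no 7×7 matrix U with entries in the nonnegative integers such that H' = H · U. -/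
/-!
Row 1 of `H` is bounded entrywise by the sum of rows 0 and 3. Right multiplication by a matrix
with nonnegative entries preserves such a row inequality, so it would pass to `H' = H * U`; but
in column 1 the matrix `H'` has a 1 in row 1 and zeros in rows 0 and 3.
-/

/-- The matrix `H` of stable Hom dimensions. -/
def Hmat : Matrix (Fin 7) (Fin 7) ℤ :=
  !![1,0,1,0,1,0,0;
     1,1,1,1,1,0,1;
     0,1,1,0,1,1,0;
     0,1,0,2,1,0,1;
     0,1,0,1,1,0,1;
     1,1,0,0,0,1,0;
     0,1,1,1,1,1,1]

/-- The matrix `H'` of stable Hom dimensions out of `Ω Y_i`. -/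
def Hmat' : Matrix (Fin 7) (Fin 7) ℤ :=
  !![1,0,1,0,1,0,0;
     1,1,0,0,0,1,0;
     0,1,1,0,1,1,0;
     0,0,0,0,0,0,0;
     0,1,1,0,1,1,0;
     1,1,0,0,0,1,0;
     0,0,0,0,0,0,0]

open Matrix in
theorem Matrix.vecMul_le_vecMul_of_nonneg {m n R : Type*} [Fintype m] [Semiring R] [PartialOrder R]
    [IsOrderedRing R] {U : Matrix m n R} (hU : ∀ i j, 0 ≤ U i j) {v w : m → R} (hvw : v ≤ w) :
    v ᵥ* U ≤ w ᵥ* U := fun j =>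
  Finset.sum_le_sum fun i _ => mul_le_mul_of_nonneg_right (hvw i) (hU i j)

theorem Hmat_one_le_zero_add_three : Hmat 1 ≤ Hmat 0 + Hmat 3 :=
  Pi.le_def.mpr (by decide)

theorem Hmat'_one_not_le_zero_add_three : ¬ Hmat' 1 ≤ Hmat' 0 + Hmat' 3 := fun h =>
  absurd (h 1) (by decide)

/-- There is no matrix `U` with nonnegative integer entries such that `H' = H * U`. -/
theorem stmt11 :
    ¬ ∃ U : Matrix (Fin 7) (Fin 7) ℤ, (∀ i j, 0 ≤ U i j) ∧ Hmat' = Hmat * U := by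
  rintro ⟨U, hU, hHU⟩
  apply Hmat'_one_not_le_zero_add_three
  simpa only [hHU, Matrix.mul_apply_eq_vecMul, Matrix.add_vecMul] using
    Matrix.vecMul_le_vecMul_of_nonneg hU Hmat_one_le_zero_add_three
end

section
/- Over the ring C₃ = (R/π²)(e → f) with R = 𝔽₃[X] and π = X, the 𝔽₃-dimension of the stable Hom-space Hom(Y₄, Y₄) in mod-C₃ modulo projectives equals 2, where Y₄ is the C₃-module given by (R/π² → 0). -/
open Polynomial

set_option maxHeartbeats 1000000 in
/-- The ground ring `R/π² = 𝔽₃[X]/(X²)`. -/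
abbrev S3 : Type := Polynomial (ZMod 3) ⧸ Ideal.span {(Polynomial.X : Polynomial (ZMod 3)) ^ 2}

/-- The ring `C₃`: `2 × 2` upper triangular matrices over `S`, i.e. the path algebra of
the quiver `e ⟶ f` over `S`. -/
def Tri (S : Type*) [CommRing S] : Subring (Matrix (Fin 2) (Fin 2) S) where
  carrier := {M | M 1 0 = 0}
  zero_mem' := by simp
  one_mem' := by simp [Matrix.one_apply]
  add_mem' := by
    intro a b ha hb
    simp only [Set.mem_setOf_eq, Matrix.add_apply] at *
    simp [ha, hb]
  neg_mem' := by
    intro a ha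
    simp only [Set.mem_setOf_eq, Matrix.neg_apply] at *
    simp [ha]
  mul_mem' := by
    intro a b ha hb
    simp only [Set.mem_setOf_eq] at *
    simp [Matrix.mul_apply, Fin.sum_univ_two, ha, hb]

variable (S : Type) [CommRing S]

/-- The module `Y₄ = (R/π² ⟶ 0)`: the underlying abelian group is `S` itself, a
triangular matrix `M` acting through its entry `M 1 1`. -/
noncomputable instance : SMul (Tri S) S :=
  ⟨fun M x => (M : Matrix (Fin 2) (Fin 2) S) 1 1 * x⟩

lemma Tri.smul_def (M : Tri S) (x : S) :
    M • x = (M : Matrix (Fin 2) (Fin 2) S) 1 1 * x := rfl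

noncomputable instance : Module (Tri S) S where
  one_smul x := by rw [Tri.smul_def]; simp [Matrix.one_apply]
  mul_smul M N x := by
    rw [Tri.smul_def, Tri.smul_def, Tri.smul_def]
    have hM : (M : Matrix (Fin 2) (Fin 2) S) 1 0 = 0 := M.2
    push_cast
    simp [Matrix.mul_apply, Fin.sum_univ_two, hM, mul_assoc]
  smul_zero M := by rw [Tri.smul_def]; exact mul_zero _
  smul_add M x y := by rw [Tri.smul_def, Tri.smul_def, Tri.smul_def]; exact mul_add _ _ _
  add_smul M N x := by
    rw [Tri.smul_def, Tri.smul_def, Tri.smul_def]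
    push_cast
    rw [Matrix.add_apply, add_mul]
  zero_smul x := by rw [Tri.smul_def]; simp

noncomputable instance (k : Type*) [CommSemiring k] [Algebra k S] :
    SMulCommClass (Tri S) k S :=
  ⟨fun M c x => by rw [Tri.smul_def, Tri.smul_def]; exact mul_smul_comm c _ x⟩

/-- The `ℤ/3`-subspace of endomorphisms of `Y₄` spanned by those factoring through a
projective `C₃`-module. -/
noncomputable def factProj : Submodule (ZMod 3) (S3 →ₗ[Tri S3] S3) :=
  Submodule.span (ZMod 3)
    {f : S3 →ₗ[Tri S3] S3 | ∃ (P : Type) (_ : AddCommGroup P) (_ : Module (Tri S3) P),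
      Module.Projective (Tri S3) P ∧
      ∃ (g : S3 →ₗ[Tri S3] P) (h : P →ₗ[Tri S3] S3), h.comp g = f}

/-!
`Y₄` is `S` with the idempotent `e₁₁` acting as the identity and the arrow `e₀₁` acting as zero.
An element of `C₃` fixed by `e₁₁` lives in row `1`, and `e₀₁` copies row `1` into row `0`, so it
is killed by `e₀₁` only if it is zero. Hence `Y₄` has no nonzero map into `C₃`, nor into a free
or projective module, and the stable endomorphisms of `Y₄` are all of `End(Y₄) ≅ S = 𝔽₃[X]/(X²)`.
-/

namespace Tri

variable {S}

noncomputable def single11 (x : S) : Tri S :=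
  ⟨Matrix.single 1 1 x, show Matrix.single 1 1 x 1 0 = 0 by simp⟩

noncomputable def single01 (x : S) : Tri S :=
  ⟨Matrix.single 0 1 x, show Matrix.single 0 1 x 1 0 = 0 by simp⟩

lemma single11_smul (x y : S) : single11 x • y = x * y := by
  simp [smul_def, single11]

lemma single01_smul (x y : S) : single01 x • y = 0 := by
  simp [smul_def, single01]

lemma eq_zero_of_single11_mul_eq_self_of_single01_mul_eq_zero {a : Tri S}
    (h11 : single11 1 * a = a) (h01 : single01 1 * a = 0) : a = 0 := by
  ext i j
  have row0 : (a : Matrix (Fin 2) (Fin 2) S) 0 j = 0 := by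
    rw [← h11]
    simp [single11, Matrix.mul_apply]
  have row1 : (a : Matrix (Fin 2) (Fin 2) S) 1 j = 0 := by
    simpa [single01, Matrix.mul_apply] using
      congrArg (fun b : Tri S => (b : Matrix (Fin 2) (Fin 2) S) 0 j) h01
  fin_cases i
  exacts [row0, row1]

lemma linearMap_to_self_eq_zero (φ : S →ₗ[Tri S] Tri S) : φ = 0 := by
  refine LinearMap.ext fun y => ?_
  refine eq_zero_of_single11_mul_eq_self_of_single01_mul_eq_zero ?_ ?_
  · rw [← smul_eq_mul, ← map_smul, single11_smul, one_mul]
  · rw [← smul_eq_mul, ← map_smul, single01_smul, map_zero]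

lemma linearMap_to_finsupp_eq_zero {ι : Type*} (ψ : S →ₗ[Tri S] (ι →₀ Tri S)) : ψ = 0 := by
  refine LinearMap.ext fun y => Finsupp.ext fun i => ?_
  exact LinearMap.congr_fun (linearMap_to_self_eq_zero (Finsupp.lapply i ∘ₗ ψ)) y

lemma linearMap_to_projective_eq_zero {P : Type*} [AddCommGroup P] [Module (Tri S) P]
    [Module.Projective (Tri S) P] (g : S →ₗ[Tri S] P) : g = 0 := by
  obtain ⟨s, hs⟩ := Module.projective_def'.mp ‹Module.Projective (Tri S) P›
  calc g = (Finsupp.linearCombination (Tri S) id ∘ₗ s) ∘ₗ g := by rw [hs, LinearMap.id_comp]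
    _ = 0 := by rw [LinearMap.comp_assoc, linearMap_to_finsupp_eq_zero (s ∘ₗ g),
      LinearMap.comp_zero]

noncomputable def mulLeft (c : S) : S →ₗ[Tri S] S where
  toFun x := c * x
  map_add' := mul_add c
  map_smul' M x := by simp only [smul_def, RingHom.id_apply]; ring

lemma eq_mulLeft_apply_one (f : S →ₗ[Tri S] S) : f = mulLeft (f 1) := by
  ext x
  calc f x = f (single11 x • 1) := by rw [single11_smul, mul_one]
    _ = x * f 1 := by rw [map_smul, single11_smul]
    _ = mulLeft (f 1) x := mul_comm _ _

noncomputable def endEquiv (k : Type*) [CommSemiring k] [Algebra k S] :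
    (S →ₗ[Tri S] S) ≃ₗ[k] S where
  toFun f := f 1
  map_add' _ _ := rfl
  map_smul' _ _ := rfl
  invFun := mulLeft
  left_inv f := (eq_mulLeft_apply_one f).symm
  right_inv c := mul_one c

end Tri

lemma factProj_eq_bot : factProj = ⊥ := by
  rw [factProj, Submodule.span_eq_bot]
  rintro f ⟨P, _, _, hP, g, h, rfl⟩
  rw [Tri.linearMap_to_projective_eq_zero g, LinearMap.comp_zero]

/-- The `𝔽₃`-dimension of the stable Hom-space `Hom(Y₄, Y₄)` in `mod-C₃` modulo
projectives equals `2`, where `Y₄ = (R/π² ⟶ 0)`. -/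
theorem stmt16 :
    Module.finrank (ZMod 3) ((S3 →ₗ[Tri S3] S3) ⧸ factProj) = 2 := by
  rw [(Submodule.quotEquivOfEqBot factProj factProj_eq_bot).finrank_eq,
    (Tri.endEquiv (ZMod 3)).finrank_eq, finrank_quotient_span_eq_natDegree, natDegree_X_pow]
end
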